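/- Let J be a finite index set, let {π^i_j : B_i → B_{ij} = B_{ji}}_{i ≠ j ∈ J} be a family of homomorphisms of unital algebras with multi-pullback B^π, and let π_i : B^π → B_i denote the restriction of the i-th canonical projection. Assume that every π_i is surjective and that the kernels {ker π_i : i ∈ J} generate a distributive sublattice of the lattice of two-sided ideals of B^π. Then the map b ↦ (b + ker π_i)_{i ∈ J} is an algebra isomorphism from B^π onto the multi-pullback of the family of canonical surjections B^π/ker π_i → B^π/(ker π_i + ker π_j) (for i ≠ j ∈ J). -/

import Mathlib

set_option synthInstance.maxHeartbeats 1000000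
set_option maxHeartbeats 1000000
/-!
**Statement 3** (Lemma 1.2 of the paper).

A family of homomorphisms of unital `k`-algebras `π^i_j : B_i → B_{ij} = B_{ji}`
(`i ≠ j ∈ J`, `J` finite) is encoded as follows: for each ordered pair `(i,j)` we
have an algebra `C i j` (playing the role of `B_{ij}`) together with the two maps
`π i j : B i →ₐ[k] C i j` (playing `π^i_j`) and `ρ i j : B j →ₐ[k] C i j`
(playing `π^j_i`, viewed in `B_{ij}`); the identification `B_{ij} = B_{ji}` is
expressed by the hypothesis `hsym`, saying that the gluing constraint determined by
`(i,j)` coincides with the one determined by `(j,i)`.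
-/

/-- Membership in the sublattice generated by a set `S` in a lattice. -/
inductive InSublattice {α : Type*} [Lattice α] (S : Set α) : α → Prop
  | base {x : α} : x ∈ S → InSublattice S x
  | inf {x y : α} : InSublattice S x → InSublattice S y → InSublattice S (x ⊓ y)
  | sup {x y : α} : InSublattice S x → InSublattice S y → InSublattice S (x ⊔ y)

/-- The canonical factor map between quotients by nested two-sided ideals. -/
def quotFactorHom {B : Type*} [Ring B] {I J : TwoSidedIdeal B} (h : I ≤ J) :
    I.ringCon.Quotient →+* J.ringCon.Quotient where
  toFun := Quotient.map' id (fun _ _ hab => TwoSidedIdeal.ringCon_le_iff.mp h hab)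
  map_one' := rfl
  map_mul' := by rintro ⟨x⟩ ⟨y⟩; rfl
  map_zero' := rfl
  map_add' := by rintro ⟨x⟩ ⟨y⟩; rfl

/-- The canonical factor map between quotients by nested two-sided ideals, as an
algebra homomorphism. -/
def quotFactorAlg (k : Type*) [CommRing k] {B : Type*} [Ring B] [Algebra k B]
    {I J : TwoSidedIdeal B} (h : I ≤ J) :
    I.ringCon.Quotient →ₐ[k] J.ringCon.Quotient :=
  { quotFactorHom h with commutes' := fun _ => rfl }

variable (k : Type*) [CommRing k] {J : Type*} (B : J → Type*)
  [∀ i, Ring (B i)] [∀ i, Algebra k (B i)]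
  (C : J → J → Type*) [∀ i j, Ring (C i j)] [∀ i j, Algebra k (C i j)]
  (π : ∀ i j, B i →ₐ[k] C i j) (ρ : ∀ i j, B j →ₐ[k] C i j)

/-- The multi-pullback `B^π` of the family, as a subalgebra of `∏_{i ∈ J} B_i`. -/
def multiPullback : Subalgebra k (∀ i, B i) where
  carrier := {b | ∀ i j, i ≠ j → π i j (b i) = ρ i j (b j)}
  mul_mem' := by
    intro x y hx hy i j hij
    simp only [Pi.mul_apply, map_mul, hx i j hij, hy i j hij]
  one_mem' := by
    intro i j hij
    simp only [Pi.one_apply, map_one]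
  add_mem' := by
    intro x y hx hy i j hij
    simp only [Pi.add_apply, map_add, hx i j hij, hy i j hij]
  zero_mem' := by
    intro i j hij
    simp only [Pi.zero_apply, map_zero]
  algebraMap_mem' := by
    intro r i j hij
    simp only [Pi.algebraMap_apply, AlgHom.commutes]

/-- The restriction `π_i : B^π → B_i` of the `i`-th canonical projection. -/
def multiPullbackProj (i : J) : multiPullback k B C π ρ →ₐ[k] B i :=
  (Pi.evalAlgHom k B i).comp (multiPullback k B C π ρ).val

/-- The kernel `ker π_i`, a two-sided ideal of `B^π`. -/
def projKer (i : J) : TwoSidedIdeal (multiPullback k B C π ρ) :=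
  TwoSidedIdeal.ker (multiPullbackProj k B C π ρ i)

/-- The multi-pullback of the family of canonical surjections
`B^π/ker π_i → B^π/(ker π_i + ker π_j)`, as a subalgebra of
`∏_{i ∈ J} B^π/ker π_i`. -/
def canonicalMultiPullback :
    Subalgebra k (∀ i, (projKer k B C π ρ i).ringCon.Quotient) where
  carrier := {q | ∀ i j, i ≠ j →
    quotFactorAlg k (le_sup_left : projKer k B C π ρ i ≤
        projKer k B C π ρ i ⊔ projKer k B C π ρ j) (q i) =
    quotFactorAlg k (le_sup_right : projKer k B C π ρ j ≤
        projKer k B C π ρ i ⊔ projKer k B C π ρ j) (q j)}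
  mul_mem' := by
    intro x y hx hy i j hij
    simp only [Pi.mul_apply, map_mul, hx i j hij, hy i j hij]
  one_mem' := by
    intro i j hij
    simp only [Pi.one_apply, map_one]
  add_mem' := by
    intro x y hx hy i j hij
    simp only [Pi.add_apply, map_add, hx i j hij, hy i j hij]
  zero_mem' := by
    intro i j hij
    simp only [Pi.zero_apply, map_zero]
  algebraMap_mem' := by
    intro r i j hij
    simp only [Pi.algebraMap_apply, AlgHom.commutes]


/-!
The map `b ↦ (b + ker π_i)_i` is injective because an element of `B^π` is determined by its
components, i.e. `⋂ᵢ ker π_i = 0`. Surjectivity is a Chinese remainder theorem: given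
`(b_i)_i` with `b_i - b_j ∈ ker π_i + ker π_j`, one finds `a` with `a - b_i ∈ ker π_i` by
induction on the indices already matched. The inductive step needs
`⋂_{i ∈ s} (ker π_i + ker π_j) ⊆ (⋂_{i ∈ s} ker π_i) + ker π_j`, which is where
distributivity of the lattice generated by the kernels enters.
-/

open Function

section Lattice

variable {α : Type*} [Lattice α]

def DistribOnSublattice (S : Set α) : Prop :=
  ∀ K L M : α, InSublattice S K → InSublattice S L → InSublattice S M →
    K ⊓ (L ⊔ M) = K ⊓ L ⊔ K ⊓ M

theorem InSublattice.finset_inf [OrderTop α] {S : Set α} {ι : Type*} {f : ι → α}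
    (hf : ∀ i, InSublattice S (f i)) {s : Finset ι} (hs : s.Nonempty) :
    InSublattice S (s.inf f) := by
  induction hs using Finset.Nonempty.cons_induction with
  | singleton a => simpa using hf a
  | cons a s _ _ ih => simpa only [Finset.inf_cons] using (hf a).inf ih

namespace DistribOnSublattice

variable {S : Set α} (hS : DistribOnSublattice S)
include hS

theorem sup_inf_sup {X Y K : α} (hX : InSublattice S X) (hY : InSublattice S Y)
    (hK : InSublattice S K) : (X ⊔ K) ⊓ (Y ⊔ K) = X ⊓ Y ⊔ K :=
  calc (X ⊔ K) ⊓ (Y ⊔ K) = (X ⊔ K) ⊓ Y ⊔ (X ⊔ K) ⊓ K := hS _ _ _ (hX.sup hK) hY hK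
    _ = Y ⊓ X ⊔ Y ⊓ K ⊔ K := by
      rw [inf_comm _ Y, hS _ _ _ hY hX hK, inf_eq_right.2 (le_sup_right : K ≤ X ⊔ K)]
    _ = X ⊓ Y ⊔ K := by rw [sup_assoc, sup_eq_right.2 (inf_le_right : Y ⊓ K ≤ K), inf_comm]

theorem finset_inf_sup_le [OrderTop α] {ι : Type*} {f : ι → α}
    (hf : ∀ i, InSublattice S (f i)) {K : α} (hK : InSublattice S K) (s : Finset ι) :
    s.inf (f · ⊔ K) ≤ s.inf f ⊔ K := by
  induction s using Finset.cons_induction with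
  | empty => simp
  | cons a s _ ih =>
    rw [Finset.inf_cons, Finset.inf_cons]
    -- `⊤ = ∅.inf f` need not lie in the sublattice generated by `S`.
    rcases s.eq_empty_or_nonempty with rfl | hs
    · simp
    calc (f a ⊔ K) ⊓ s.inf (f · ⊔ K)
        ≤ (f a ⊔ K) ⊓ (s.inf f ⊔ K) := inf_le_inf_left _ ih
      _ = f a ⊓ s.inf f ⊔ K := hS.sup_inf_sup (hf a) (.finset_inf hf hs) hK

end DistribOnSublattice

end Lattice

namespace TwoSidedIdeal

variable {R : Type*} [Ring R]

theorem mk'_eq_mk'_iff_sub_mem (I : TwoSidedIdeal R) {x y : R} :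
    I.ringCon.mk' x = I.ringCon.mk' y ↔ x - y ∈ I :=
  I.ringCon.eq.trans (I.rel_iff x y)

theorem exists_sub_mem_of_sub_mem_sup {S : Set (TwoSidedIdeal R)}
    (hS : DistribOnSublattice S) {ι : Type*} {K : ι → TwoSidedIdeal R} (hK : ∀ i, K i ∈ S)
    {b : ι → R} (hb : ∀ i j, i ≠ j → b i - b j ∈ K i ⊔ K j) (s : Finset ι) :
    ∃ a, ∀ i ∈ s, a - b i ∈ K i := by
  induction s using Finset.cons_induction with
  | empty => exact ⟨0, by simp⟩
  | cons j s hj ih =>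
    obtain ⟨a, ha⟩ := ih
    have hmem : b j - a ∈ s.inf (K · ⊔ K j) := by
      refine Finset.inf_induction (p := (b j - a ∈ ·)) (mem_top _)
        (fun _ h₁ _ h₂ => (mem_inf _).2 ⟨h₁, h₂⟩) fun i hi => ?_
      rw [show b j - a = (b j - b i) - (a - b i) by abel]
      refine sub_mem _ ?_ (mem_sup_left (ha i hi))
      simpa only [sup_comm] using hb j i (ne_of_mem_of_not_mem hi hj).symm
    obtain ⟨y, hy, z, hz, hyz⟩ :=
      mem_sup.1 (hS.finset_inf_sup_le (fun i => .base (hK i)) (.base (hK j)) s hmem)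
    refine ⟨a + y, (Finset.forall_mem_cons hj _).2 ⟨?_, fun i hi => ?_⟩⟩
    · rw [show a + y - b j = -z by rw [← sub_sub_cancel (b j) a, ← hyz]; abel]
      exact neg_mem _ hz
    · rw [show a + y - b i = (a - b i) + y by abel]
      exact add_mem _ (ha i hi) (SetLike.le_def.1 (Finset.inf_le hi) hy)

end TwoSidedIdeal

theorem quotFactorAlg_mk' {A : Type*} [Ring A] [Algebra k A] {I I' : TwoSidedIdeal A}
    (h : I ≤ I') (x : A) : quotFactorAlg k h (I.ringCon.mk' x) = I'.ringCon.mk' x :=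
  rfl

def toCanonicalMultiPullback :
    multiPullback k B C π ρ →ₐ[k] canonicalMultiPullback k B C π ρ :=
  AlgHom.codRestrict (AlgHom.pi fun i => (projKer k B C π ρ i).ringCon.mkₐ k) _
    fun _ _ _ _ => rfl

theorem toCanonicalMultiPullback_injective :
    Injective (toCanonicalMultiPullback k B C π ρ) := by
  intro x y hxy
  ext i
  have hi := (projKer k B C π ρ i).mk'_eq_mk'_iff_sub_mem.1
    (congr_fun (congr_arg Subtype.val hxy) i)
  exact sub_eq_zero.1 ((TwoSidedIdeal.mem_ker _).1 hi)

theorem toCanonicalMultiPullback_surjective [Finite J]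
    (hdist : DistribOnSublattice {I | ∃ i, I = projKer k B C π ρ i}) :
    Surjective (toCanonicalMultiPullback k B C π ρ) := by
  rintro ⟨q, hq⟩
  choose b hb using fun i => RingCon.mk'_surjective _ (q i)
  have hb_sup : ∀ i j, i ≠ j →
      b i - b j ∈ projKer k B C π ρ i ⊔ projKer k B C π ρ j := by
    intro i j hij
    refine TwoSidedIdeal.mk'_eq_mk'_iff_sub_mem _ |>.1 ?_
    simpa only [← hb, quotFactorAlg_mk'] using hq i j hij
  have := Fintype.ofFinite J
  obtain ⟨a, ha⟩ := TwoSidedIdeal.exists_sub_mem_of_sub_mem_sup hdist (fun i => ⟨i, rfl⟩)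
    hb_sup Finset.univ
  refine ⟨a, Subtype.ext <| funext fun i => ?_⟩
  change (projKer k B C π ρ i).ringCon.mk' a = q i
  rw [← hb i]
  exact (TwoSidedIdeal.mk'_eq_mk'_iff_sub_mem _).2 (ha i (Finset.mem_univ i))

theorem multiPullback_iso_canonicalMultiPullback
    [Finite J]
    -- the kernels `ker π_i` generate a distributive lattice of two-sided ideals:
    (hdist : ∀ K L M : TwoSidedIdeal (multiPullback k B C π ρ),
      InSublattice {I | ∃ i, I = projKer k B C π ρ i} K →
      InSublattice {I | ∃ i, I = projKer k B C π ρ i} L →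
      InSublattice {I | ∃ i, I = projKer k B C π ρ i} M →
      K ⊓ (L ⊔ M) = (K ⊓ L) ⊔ (K ⊓ M)) :
    ∃ e : multiPullback k B C π ρ ≃ₐ[k] canonicalMultiPullback k B C π ρ,
      ∀ (b : multiPullback k B C π ρ) (i : J),
        (e b : ∀ i, (projKer k B C π ρ i).ringCon.Quotient) i =
          (projKer k B C π ρ i).ringCon.mk' b :=
  ⟨.ofBijective _ ⟨toCanonicalMultiPullback_injective k B C π ρ,
      toCanonicalMultiPullback_surjective k B C π ρ hdist⟩, fun _ _ => rfl⟩
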